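/- If B is a weak c-ideal of a finite-dimensional Lie algebra L, then B/B_L has a subideal complement in L/B_L, i.e., there is a subideal C/B_L of L/B_L with L/B_L = B/B_L + C/B_L and B/B_L ∩ C/B_L = 0. Conversely, if B/B_L has a subideal complement in L/B_L, then B is a weak c-ideal of L. -/

import Mathlib

open LieAlgebra Module

section Defs

variable (F : Type*) [Field F] {L : Type*} [LieRing L] [LieAlgebra F L]

/-- `A` is an ideal of `B`, where `A` and `B` are subalgebras of `L`. -/
def IsIdealOf (A B : LieSubalgebra F L) : Prop :=
  A ≤ B ∧ ∀ x ∈ B, ∀ y ∈ A, ⁅x, y⁆ ∈ A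

/-- `C` is a subideal of `L`: there is a chain of subalgebras from `C` to `L`,
each an ideal in the next. -/
def IsSubideal (C : LieSubalgebra F L) : Prop :=
  ∃ (n : ℕ) (f : ℕ → LieSubalgebra F L),
    f 0 = C ∧ f n = ⊤ ∧ ∀ i < n, IsIdealOf F (f i) (f (i + 1))

/-- The core `B_L` of a subalgebra `B`: the largest ideal of `L` contained in `B`. -/
def lieCore (B : LieSubalgebra F L) : LieIdeal F L :=
  sSup {I : LieIdeal F L | (I : Set L) ⊆ (B : Set L)}

/-- `B` is a weak c-ideal of `L`. -/
def IsWeakCIdeal (B : LieSubalgebra F L) : Prop :=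
  ∃ C : LieSubalgebra F L, IsSubideal F C ∧ B ⊔ C = ⊤ ∧
    ((B ⊓ C : LieSubalgebra F L) : Set L) ⊆ (lieCore F B : Set L)

/-- `B` is a c-ideal of `L`. -/
def IsCIdeal (B : LieSubalgebra F L) : Prop :=
  ∃ C : LieSubalgebra F L, (∀ x : L, ∀ y ∈ C, ⁅x, y⁆ ∈ C) ∧ B ⊔ C = ⊤ ∧
    ((B ⊓ C : LieSubalgebra F L) : Set L) ⊆ (lieCore F B : Set L)

/-- `M` is a maximal subalgebra of `L`. -/
def IsMaxSubalgebra (M : LieSubalgebra F L) : Prop :=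
  M ≠ ⊤ ∧ ∀ K : LieSubalgebra F L, M < K → K = ⊤

/-- `B` is a maximal subalgebra of the subalgebra `C`. -/
def IsMaxSubalgebraIn (B C : LieSubalgebra F L) : Prop :=
  B < C ∧ ∀ K : LieSubalgebra F L, B < K → K ≤ C → K = C

/-- `C` is a maximal nilpotent subalgebra of `L`. -/
def IsMaxNilpotentSubalgebra (C : LieSubalgebra F L) : Prop :=
  LieModule.IsNilpotent C C ∧
    ∀ D : LieSubalgebra F L, LieModule.IsNilpotent D D → C ≤ D → C = D

/-- The quotient map `L → L ⧸ I` as a morphism of Lie algebras. -/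
def quotHom (I : LieIdeal F L) : L →ₗ⁅F⁆ L ⧸ I :=
  { (LieSubmodule.Quotient.mk' I).toLinearMap with
    map_lie' := fun {_ _} => rfl }

end Defs

/-!
The quotient map `φ : L → L/B_L` is a surjection whose kernel `B_L` lies in `B`. Images and
preimages of subideals under `φ` are subideals, `φ` turns `B ⊔ C = ⊤` into `φ B ⊔ φ C = ⊤` and
back, and since `ker φ ≤ B` we have `φ B ⊓ φ C = φ (B ⊓ C)`, which vanishes exactly when
`B ⊓ C ≤ B_L`.
-/

namespace LieSubalgebra

variable {R L L₂ : Type*} [CommRing R] [LieRing L] [LieAlgebra R L] [LieRing L₂]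
  [LieAlgebra R L₂] {f : L →ₗ⁅R⁆ L₂}

lemma map_sup (K K' : LieSubalgebra R L) : (K ⊔ K').map f = K.map f ⊔ K'.map f :=
  gc_map_comap.l_sup

lemma map_comap_of_surjective (hf : Function.Surjective f) (K₂ : LieSubalgebra R L₂) :
    (K₂.comap f).map f = K₂ :=
  SetLike.coe_injective (Set.image_preimage_eq _ hf)

lemma map_top_of_surjective (hf : Function.Surjective f) : (⊤ : LieSubalgebra R L).map f = ⊤ :=
  map_comap_of_surjective hf ⊤

lemma comap_map_of_ker_le {K : LieSubalgebra R L} (hK : (f.ker : LieSubalgebra R L) ≤ K) :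
    (K.map f).comap f = K := by
  refine le_antisymm ?_ (gc_map_comap.le_u_l K)
  rintro x ⟨y, hy, hyx⟩
  have hxy : x - y ∈ f.ker :=
    LieHom.mem_ker.2 (by rw [map_sub]; exact sub_eq_zero.2 hyx.symm)
  simpa using K.add_mem hy (hK hxy)

lemma map_inf_of_ker_le {K : LieSubalgebra R L} (hK : (f.ker : LieSubalgebra R L) ≤ K)
    (K' : LieSubalgebra R L) : K.map f ⊓ K'.map f = (K ⊓ K').map f := by
  refine le_antisymm ?_ (gc_map_comap.monotone_l.map_inf_le K K')
  rintro _ ⟨⟨x, hx, rfl⟩, ⟨y, hy, hyx⟩⟩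
  have hyK : y ∈ K := by
    have hxy : x - y ∈ f.ker :=
      LieHom.mem_ker.2 (by rw [map_sub]; exact sub_eq_zero.2 hyx.symm)
    simpa using K.sub_mem hx (hK hxy)
  exact ⟨y, ⟨hyK, hy⟩, hyx⟩

lemma map_eq_bot_iff {K : LieSubalgebra R L} : K.map f = ⊥ ↔ K ≤ f.ker := by
  rw [_root_.eq_bot_iff, map_le_iff_le_comap]
  simp only [SetLike.le_def, mem_comap, mem_bot, LieIdeal.mem_toLieSubalgebra, LieHom.mem_ker]

end LieSubalgebra

section

variable {F : Type*} [Field F] {L L₂ : Type*} [LieRing L] [LieAlgebra F L] [LieRing L₂]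
  [LieAlgebra F L₂]

lemma lieCore_le_self (B : LieSubalgebra F L) : (lieCore F B : LieSubalgebra F L) ≤ B := by
  change (lieCore F B).toSubmodule ≤ B.toSubmodule
  rw [lieCore, LieSubmodule.sSup_toSubmodule]
  exact sSup_le fun _ ⟨_, hI, hp⟩ => hp ▸ hI

lemma quotHom_surjective (I : LieIdeal F L) : Function.Surjective (quotHom F I) :=
  LieSubmodule.Quotient.surjective_mk' I

lemma ker_quotHom (I : LieIdeal F L) : (quotHom F I).ker = I := by
  ext
  exact LieSubmodule.Quotient.mk_eq_zero'

lemma IsSubideal.map {C : LieSubalgebra F L} (hC : IsSubideal F C) {f : L →ₗ⁅F⁆ L₂}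
    (hf : Function.Surjective f) : IsSubideal F (C.map f) := by
  obtain ⟨n, g, hg₀, hgn, hchain⟩ := hC
  refine ⟨n, fun i => (g i).map f, by simp only [hg₀], ?_, fun i hi => ?_⟩
  · simp only [hgn, LieSubalgebra.map_top_of_surjective hf]
  obtain ⟨hle, hideal⟩ := hchain i hi
  refine ⟨LieSubalgebra.gc_map_comap.monotone_l hle, ?_⟩
  rintro _ ⟨x, hx, rfl⟩ _ ⟨y, hy, rfl⟩
  exact ⟨⁅x, y⁆, hideal x hx y hy, f.map_lie x y⟩

lemma IsSubideal.comap {C : LieSubalgebra F L₂} (hC : IsSubideal F C) (f : L →ₗ⁅F⁆ L₂) :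
    IsSubideal F (C.comap f) := by
  obtain ⟨n, g, hg₀, hgn, hchain⟩ := hC
  refine ⟨n, fun i => (g i).comap f, by simp only [hg₀], ?_, fun i hi => ?_⟩
  · simp only [hgn]
    rfl
  obtain ⟨hle, hideal⟩ := hchain i hi
  refine ⟨LieSubalgebra.gc_map_comap.monotone_u hle, fun x hx y hy => ?_⟩
  simpa [LieSubalgebra.mem_comap, f.map_lie] using hideal (f x) hx (f y) hy

end

theorem isWeakCIdeal_iff_complement_general {F : Type*} [Field F] {L : Type*} [LieRing L] [LieAlgebra F L]
    (B : LieSubalgebra F L) :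
    IsWeakCIdeal F B ↔
      ∃ C : LieSubalgebra F (L ⧸ lieCore F B), IsSubideal F C ∧
        B.map (quotHom F (lieCore F B)) ⊔ C = ⊤ ∧
        B.map (quotHom F (lieCore F B)) ⊓ C = ⊥ := by
  set φ := quotHom F (lieCore F B)
  have hsurj : Function.Surjective φ := quotHom_surjective _
  have hker : (φ.ker : LieSubalgebra F L) ≤ B := by
    rw [ker_quotHom]
    exact lieCore_le_self B
  constructor
  · rintro ⟨C, hC, hsup, hinf⟩
    refine ⟨C.map φ, hC.map hsurj, ?_, ?_⟩
    · rw [← LieSubalgebra.map_sup, hsup, LieSubalgebra.map_top_of_surjective hsurj]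
    · rw [LieSubalgebra.map_inf_of_ker_le hker, LieSubalgebra.map_eq_bot_iff, ker_quotHom]
      exact hinf
  · rintro ⟨C, hC, hsup, hinf⟩
    refine ⟨C.comap φ, hC.comap φ, ?_, ?_⟩
    · rw [← LieSubalgebra.comap_map_of_ker_le (hker.trans le_sup_left), LieSubalgebra.map_sup,
        LieSubalgebra.map_comap_of_surjective hsurj, hsup]
      rfl
    · rintro x ⟨hxB, hxC⟩
      have hφx : φ x ∈ B.map φ ⊓ C := ⟨⟨x, hxB, rfl⟩, hxC⟩
      rw [hinf] at hφx
      exact (ker_quotHom (lieCore F B)).le (LieHom.mem_ker.2 hφx)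

theorem isWeakCIdeal_iff_complement {F : Type*} [Field F] {L : Type*} [LieRing L] [LieAlgebra F L]
    [FiniteDimensional F L] (B : LieSubalgebra F L) :
    IsWeakCIdeal F B ↔
      ∃ C : LieSubalgebra F (L ⧸ lieCore F B), IsSubideal F C ∧
        B.map (quotHom F (lieCore F B)) ⊔ C = ⊤ ∧
        B.map (quotHom F (lieCore F B)) ⊓ C = ⊥ :=
  isWeakCIdeal_iff_complement_general B
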